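/- arXiv:2010.02989 — 5 statements merged into one kernel-verified Lean document; each statement's English description precedes it below -/
import Mathlib

section
/- Every finite simple graph G on a finite vertex type V with a weight function w : V → ℝ satisfying w v ≥ 0 for all v has an independent set S whose total weight satisfies ∑_{v ∈ S} w v ≥ ∑_{u ∈ V} w u / (deg(u) + 1), where deg(u) is the degree of u in G. (This is the guaranteed weight of the greedy GWMIN algorithm for the Maximum Weight Independent Set problem.) -/
/-! Greedy argument (GWMIN): in the graph induced on the remaining vertices `A`, pick `v`
maximising `w v / (deg_A v + 1)` and delete its closed neighbourhood `N`. The `|N| = deg_A v + 1`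
terms of `N` contribute at most `|N| · w v / (deg_A v + 1) = w v`, and degrees only drop on
`A \ N`, so the bound for `A \ N` given by induction extends to `A` once `v` is added. -/

/-- An independent set of `G`: no two distinct vertices are adjacent. -/
def IsIndep {V : Type*} (G : SimpleGraph V) (P : Finset V) : Prop :=
  ∀ u ∈ P, ∀ v ∈ P, u ≠ v → ¬ G.Adj u v

open Finset

section

variable {V : Type*}

theorem IsIndep.empty (G : SimpleGraph V) : IsIndep G ∅ := by
  simp [IsIndep]

theorem IsIndep.insert [DecidableEq V] {G : SimpleGraph V} {S : Finset V} {v : V}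
    (hS : IsIndep G S) (hv : ∀ x ∈ S, ¬ G.Adj v x) : IsIndep G (insert v S) := by
  intro a ha b hb hab
  rcases mem_insert.1 ha with rfl | haS <;> rcases mem_insert.1 hb with rfl | hbS
  · exact absurd rfl hab
  · exact hv b hbS
  · exact fun h => hv a haS h.symm
  · exact hS a haS b hbS hab

namespace SimpleGraph

variable (G : SimpleGraph V) [DecidableRel G.Adj]

def degreeWithin (A : Finset V) (u : V) : ℕ := #{x ∈ A | G.Adj u x}

theorem degreeWithin_mono {A B : Finset V} (h : A ⊆ B) (u : V) :
    G.degreeWithin A u ≤ G.degreeWithin B u :=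
  card_le_card (filter_subset_filter _ h)

theorem degreeWithin_univ [Fintype V] (u : V) : G.degreeWithin univ u = G.degree u := by
  rw [← card_neighborFinset_eq_degree, neighborFinset_eq_filter, degreeWithin]

theorem card_insert_filter_adj [DecidableEq V] (A : Finset V) (v : V) :
    #(insert v {x ∈ A | G.Adj v x}) = G.degreeWithin A v + 1 :=
  card_insert_of_notMem (by simp)

theorem div_degreeWithin_antitone {w : ℝ} (hw : 0 ≤ w) {A B : Finset V} (h : A ⊆ B) (u : V) :
    w / (G.degreeWithin B u + 1) ≤ w / (G.degreeWithin A u + 1) := by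
  gcongr
  exact G.degreeWithin_mono h u

theorem exists_isIndep_subset_sum_div_degreeWithin_le [DecidableEq V] (w : V → ℝ)
    (hw : ∀ v, 0 ≤ w v) (A : Finset V) :
    ∃ S ⊆ A, IsIndep G S ∧ ∑ u ∈ A, w u / (G.degreeWithin A u + 1) ≤ ∑ v ∈ S, w v := by
  induction A using Finset.strongInduction with
  | H A ih =>
  rcases A.eq_empty_or_nonempty with rfl | hA
  · exact ⟨∅, empty_subset _, IsIndep.empty G, by simp⟩
  set f : V → ℝ := fun u => w u / (G.degreeWithin A u + 1) with hf
  obtain ⟨v, hvA, hmax⟩ := A.exists_max_image f hA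
  set N := insert v {x ∈ A | G.Adj v x} with hN
  have hNA : N ⊆ A := insert_subset hvA (filter_subset _ _)
  obtain ⟨S, hSA, hS, hSw⟩ := ih (A \ N) (sdiff_ssubset hNA ⟨v, mem_insert_self _ _⟩)
  have hSN : ∀ x ∈ S, x ∉ N := fun x hx => (mem_sdiff.1 (hSA hx)).2
  have hvS : ∀ x ∈ S, ¬ G.Adj v x := fun x hx hvx =>
    hSN x hx (mem_insert_of_mem (mem_filter.2 ⟨(mem_sdiff.1 (hSA hx)).1, hvx⟩))
  refine ⟨insert v S, insert_subset hvA (hSA.trans sdiff_subset), hS.insert hvS, ?_⟩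
  have hNw : ∑ u ∈ N, f u ≤ w v :=
    calc ∑ u ∈ N, f u ≤ #N • f v := sum_le_card_nsmul _ _ _ fun u hu => hmax u (hNA hu)
      _ = w v := by
        rw [nsmul_eq_mul, hN, card_insert_filter_adj, hf]
        push_cast
        field_simp
  have hrest : ∑ u ∈ A \ N, f u ≤ ∑ u ∈ A \ N, w u / (G.degreeWithin (A \ N) u + 1) :=
    sum_le_sum fun u _ => G.div_degreeWithin_antitone (hw u) sdiff_subset u
  calc ∑ u ∈ A, f u = ∑ u ∈ A \ N, f u + ∑ u ∈ N, f u := (sum_sdiff hNA).symm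
    _ ≤ ∑ x ∈ S, w x + w v := add_le_add (hrest.trans hSw) hNw
    _ = ∑ x ∈ insert v S, w x := by
      rw [sum_insert fun h => hSN v h (mem_insert_self _ _), add_comm]

end SimpleGraph

end

/-- Guaranteed weight of the GWMIN greedy algorithm: every finite weighted graph with
nonnegative weights has an independent set of total weight at least
`∑ u, w u / (deg u + 1)`. -/
theorem stmt_2 {V : Type*} [Fintype V] [DecidableEq V] (G : SimpleGraph V)
    [DecidableRel G.Adj] (w : V → ℝ) (hw : ∀ v, 0 ≤ w v) :
    ∃ S : Finset V, IsIndep G S ∧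
      ∑ u : V, w u / (G.degree u + 1) ≤ ∑ v ∈ S, w v := by
  obtain ⟨S, -, hS, hSw⟩ := G.exists_isIndep_subset_sum_div_degreeWithin_le w hw univ
  refine ⟨S, hS, ?_⟩
  simpa only [G.degreeWithin_univ] using hSw
end

section
/- Let G be a finite simple graph on a finite vertex type V with a weight function w : V → ℝ such that w v > 0 for all v. If a vertex v is conflict-ridden, i.e., Score_max(v) < ∑_{u ∈ V} w u / (deg(u) + 1), then v does not belong to any maximum weight independent set of G: for every independent set P of G with v ∈ P there exists an independent set S of G with Score(P) < Score(S). -/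
/-- The score of a sharing plan. -/
def Score {V : Type*} (w : V → ℝ) (P : Finset V) : ℝ := ∑ v ∈ P, w v

/-- `Score_max v`: the sum of the weights of all vertices that are not neighbors of `v`. -/
def ScoreMax {V : Type*} [Fintype V] [DecidableEq V] (G : SimpleGraph V)
    [DecidableRel G.Adj] (w : V → ℝ) (v : V) : ℝ :=
  ∑ u ∈ Finset.univ \ G.neighborFinset v, w u

open Finset

theorem isIndep_iff_isIndepSet {V : Type*} {G : SimpleGraph V} {P : Finset V} :
    IsIndep G P ↔ G.IsIndepSet (P : Set V) :=
  Iff.rfl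

namespace SimpleGraph

theorem IsIndepSet.disjoint_neighborFinset {V : Type*} {G : SimpleGraph V} {P : Finset V}
    (hP : G.IsIndepSet (P : Set V)) {v : V} [Fintype (G.neighborSet v)] (hv : v ∈ P) :
    Disjoint P (G.neighborFinset v) :=
  Finset.disjoint_left.2 fun {u} hu hadj => by
    rw [mem_neighborFinset] at hadj
    exact hP hv hu (G.ne_of_adj hadj) hadj

variable {V : Type*} [Fintype V] [DecidableEq V] (G : SimpleGraph V) [DecidableRel G.Adj]

noncomputable def caroWeiBound (w : V → ℝ) (A : Finset V) : ℝ :=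
  ∑ u ∈ A, w u / (#(A ∩ G.neighborFinset u) + 1)

theorem caroWeiBound_univ (w : V → ℝ) :
    G.caroWeiBound w univ = ∑ u, w u / (G.degree u + 1) := by
  simp only [caroWeiBound, univ_inter, card_neighborFinset_eq_degree]

variable {G}

theorem sum_inter_insert_neighborFinset_le {w : V → ℝ} {A : Finset V} {v : V} (hv : v ∈ A)
    (hmax : ∀ u ∈ A, w u / (#(A ∩ G.neighborFinset u) + 1 : ℝ) ≤
      w v / (#(A ∩ G.neighborFinset v) + 1)) :
    ∑ u ∈ A ∩ insert v (G.neighborFinset v), w u / (#(A ∩ G.neighborFinset u) + 1 : ℝ) ≤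
      w v := by
  have hcard : #(A ∩ insert v (G.neighborFinset v)) = #(A ∩ G.neighborFinset v) + 1 := by
    rw [inter_insert_of_mem hv, card_insert_of_notMem]
    simp
  calc _ ≤ #(A ∩ insert v (G.neighborFinset v)) • (w v / (#(A ∩ G.neighborFinset v) + 1)) :=
        sum_le_card_nsmul _ _ _ fun u hu => hmax u (mem_of_mem_inter_left hu)
    _ = w v := by
        rw [nsmul_eq_mul, hcard]
        push_cast
        field_simp

theorem sum_div_le_caroWeiBound {w : V → ℝ} (hw : 0 ≤ w) {A B : Finset V} (hBA : B ⊆ A) :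
    ∑ u ∈ B, w u / (#(A ∩ G.neighborFinset u) + 1 : ℝ) ≤ G.caroWeiBound w B := by
  refine sum_le_sum fun u _ => div_le_div_of_nonneg_left (hw u) (by positivity) ?_
  exact_mod_cast Nat.add_le_add_right (card_le_card (inter_subset_inter_right hBA)) 1

theorem exists_isIndepSet_caroWeiBound_le {w : V → ℝ} (hw : 0 ≤ w) (A : Finset V) :
    ∃ S ⊆ A, G.IsIndepSet (S : Set V) ∧ G.caroWeiBound w A ≤ ∑ u ∈ S, w u := by
  induction A using Finset.strongInduction with
  | H A ih =>
    rcases A.eq_empty_or_nonempty with rfl | hA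
    · exact ⟨∅, empty_subset _, by simp, by simp [caroWeiBound]⟩
    obtain ⟨v, hvA, hmax⟩ := exists_max_image A
      (fun u => w u / (#(A ∩ G.neighborFinset u) + 1 : ℝ)) hA
    set B := A \ insert v (G.neighborFinset v)
    have hBA : B ⊂ A := (ssubset_iff_of_subset sdiff_subset).2 ⟨v, hvA, by simp⟩
    obtain ⟨S, hSB, hS, hbound⟩ := ih B hBA
    have hvS : v ∉ S := fun h => by simpa [B] using hSB h
    refine ⟨insert v S, insert_subset hvA (hSB.trans sdiff_subset), ?_, ?_⟩
    · have hnotAdj : ∀ u ∈ S, ¬G.Adj v u := fun u hu hadj =>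
        (mem_sdiff.1 (hSB hu)).2 (mem_insert_of_mem ((G.mem_neighborFinset v u).2 hadj))
      rw [coe_insert]
      exact hS.insert fun u hu _ => ⟨hnotAdj u hu, fun hadj => hnotAdj u hu hadj.symm⟩
    · rw [sum_insert hvS, caroWeiBound,
        ← sum_inter_add_sum_sdiff A (insert v (G.neighborFinset v))]
      exact add_le_add (sum_inter_insert_neighborFinset_le hvA hmax)
        ((sum_div_le_caroWeiBound hw sdiff_subset).trans hbound)

end SimpleGraph

theorem score_le_scoreMax {V : Type*} [Fintype V] [DecidableEq V] {G : SimpleGraph V}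
    [DecidableRel G.Adj] {w : V → ℝ} (hw : 0 ≤ w) {P : Finset V} (hP : IsIndep G P) {v : V}
    (hv : v ∈ P) : Score w P ≤ ScoreMax G w v :=
  sum_le_sum_of_subset_of_nonneg
    (subset_sdiff.2 ⟨subset_univ P, (isIndep_iff_isIndepSet.1 hP).disjoint_neighborFinset hv⟩)
    fun u _ _ => hw u

/-- A conflict-ridden candidate (one with `Score_max(v)` below the guaranteed GWMIN
weight) does not belong to any maximum weight independent set of `G`. -/
theorem stmt_3 {V : Type*} [Fintype V] [DecidableEq V] (G : SimpleGraph V)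
    [DecidableRel G.Adj] (w : V → ℝ) (hw : ∀ v, 0 < w v) (v : V)
    (hcr : ScoreMax G w v < ∑ u : V, w u / (G.degree u + 1)) :
    ∀ P : Finset V, IsIndep G P → v ∈ P →
      ∃ S : Finset V, IsIndep G S ∧ Score w P < Score w S := by
  intro P hP hvP
  have hw₀ : 0 ≤ w := fun u => (hw u).le
  obtain ⟨S, -, hS, hbound⟩ := G.exists_isIndepSet_caroWeiBound_le hw₀ univ
  refine ⟨S, isIndep_iff_isIndepSet.2 hS, ?_⟩
  calc Score w P ≤ ScoreMax G w v := score_le_scoreMax hw₀ hP hvP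
    _ < ∑ u, w u / (G.degree u + 1) := hcr
    _ = G.caroWeiBound w univ := (G.caroWeiBound_univ w).symm
    _ ≤ Score w S := hbound
end

section
/- Let G be a finite simple graph on a vertex type V, let P be a finite set of vertices with |P| > 2, and let P₁ and P₂ be two distinct independent sets of G that are both parents of P (i.e., P₁, P₂ ⊂ P and |P₁| = |P₂| = |P| − 1, with P = P₁ ∪ P₂). Let v₁ be the unique element of P₁ \ P₂ and v₂ the unique element of P₂ \ P₁. If v₁ and v₂ are not adjacent in G, then P is an independent set of G. -/
namespace IsIndep

variable {V : Type*} [DecidableEq V] {G : SimpleGraph V} {s t : Finset V}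

lemma not_adj_of_mem_of_mem (hs : IsIndep G s) (ht : IsIndep G t)
    (hst : ∀ a ∈ s \ t, ∀ b ∈ t \ s, ¬ G.Adj a b)
    ⦃a b : V⦄ (ha : a ∈ s) (hb : b ∈ t) (hab : a ≠ b) : ¬ G.Adj a b := by
  by_cases hbs : b ∈ s
  · exact hs a ha b hbs hab
  by_cases hat : a ∈ t
  · exact ht a hat b hb hab
  exact hst a (Finset.mem_sdiff.2 ⟨ha, hat⟩) b (Finset.mem_sdiff.2 ⟨hb, hbs⟩)

lemma union (hs : IsIndep G s) (ht : IsIndep G t)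
    (hst : ∀ a ∈ s \ t, ∀ b ∈ t \ s, ¬ G.Adj a b) : IsIndep G (s ∪ t) := by
  have cross := hs.not_adj_of_mem_of_mem ht hst
  intro u hu v hv huv
  rcases Finset.mem_union.1 hu with hu | hu <;> rcases Finset.mem_union.1 hv with hv | hv
  · exact hs u hu v hv huv
  · exact cross hu hv huv
  · exact fun h => cross hv hu huv.symm h.symm
  · exact ht u hu v hv huv

end IsIndep

theorem stmt_8_general {V : Type*} [DecidableEq V] (G : SimpleGraph V) (P P₁ P₂ : Finset V)
    (h₁ : IsIndep G P₁) (h₂ : IsIndep G P₂)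
    (hunion : P = P₁ ∪ P₂)
    (v₁ v₂ : V) (hv₁ : P₁ \ P₂ = {v₁}) (hv₂ : P₂ \ P₁ = {v₂})
    (hadj : ¬ G.Adj v₁ v₂) :
    IsIndep G P := by
  subst hunion
  refine h₁.union h₂ ?_
  rw [hv₁, hv₂]
  simpa using hadj

/-- If two distinct valid parents `P₁, P₂` of `P` (with `P = P₁ ∪ P₂`) differ exactly in
`v₁` and `v₂`, and `v₁` and `v₂` are not adjacent, then `P` is valid. -/
theorem stmt_8 {V : Type*} [DecidableEq V] (G : SimpleGraph V) (P P₁ P₂ : Finset V)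
    (hcard : 2 < P.card) (hne : P₁ ≠ P₂)
    (h₁ : IsIndep G P₁) (h₂ : IsIndep G P₂)
    (hsub₁ : P₁ ⊂ P) (hsub₂ : P₂ ⊂ P)
    (hc₁ : P₁.card = P.card - 1) (hc₂ : P₂.card = P.card - 1)
    (hunion : P = P₁ ∪ P₂)
    (v₁ v₂ : V) (hv₁ : P₁ \ P₂ = {v₁}) (hv₂ : P₂ \ P₁ = {v₂})
    (hadj : ¬ G.Adj v₁ v₂) :
    IsIndep G P :=
  stmt_8_general G P P₁ P₂ h₁ h₂ hunion v₁ v₂ hv₁ hv₂ hadj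
end

section
/- Let Event be a type with a map type : Event → τ for a type τ of event types with decidable equality. For every pattern p : List τ, event type E : τ, stream l : List Event, and event e : Event, the match count satisfies the incremental recurrence matchCount (p ++ [E]) (l ++ [e]) = matchCount (p ++ [E]) l + (if type e = E then matchCount p l else 0). (This is the correctness of online event sequence aggregation: the count of a prefix pattern of length j is updated from its previous value and the count of the prefix of length j − 1.) -/
/-- `matchCount type p l` is the number of matches of the pattern `p` in the stream `l`,
i.e. the number of sublists (subsequences) of `l` whose list of event types equals `p`. -/
def matchCount {Event τ : Type*} [DecidableEq τ] (type : Event → τ)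
    (p : List τ) (l : List Event) : ℕ :=
  (l.sublists.filter (fun s => s.map type = p)).length

/-- A sublist of `l ++ [a]` either is a sublist of `l` or ends with this last `a`. -/
theorem List.length_filter_sublists_concat {α : Type*} (l : List α) (a : α)
    (f : List α → Bool) :
    ((l ++ [a]).sublists.filter f).length =
      (l.sublists.filter f).length + (l.sublists.filter fun s => f (s ++ [a])).length := by
  rw [List.sublists_concat, List.filter_append, List.length_append, List.filter_map,
    List.length_map]
  rfl

/-- Correctness of online event sequence aggregation: the count of a pattern of length
`j` is updated incrementally from its previous value and the count of the prefix of
length `j − 1`. -/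
theorem stmt_11 {Event τ : Type*} [DecidableEq τ] (type : Event → τ)
    (p : List τ) (E : τ) (l : List Event) (e : Event) :
    matchCount type (p ++ [E]) (l ++ [e]) =
      matchCount type (p ++ [E]) l +
        (if type e = E then matchCount type p l else 0) := by
  have extends_match (s : List Event) :
      (s ++ [e]).map type = p ++ [E] ↔ s.map type = p ∧ type e = E := by
    simp
  rw [matchCount, List.length_filter_sublists_concat]
  congr 1
  split_ifs with h
  · simp only [extends_match, h, and_true, matchCount]
  · simp only [extends_match, h, and_false, decide_false, List.filter_false, List.length_nil]
end

section
/- Let Event be a type with a map type : Event → τ for a type τ of event types with decidable equality. For all patterns s, t : List τ with t nonempty, and every stream l : List Event, matchCount (s ++ t) l = ∑_{i=0}^{|l|−1} (if type (l.get i) = t.head then matchCount s (l.take i) * matchCount t.tail (l.drop (i+1)) else 0). (This is the correctness of the Shared method's count combination step: the count of the concatenated pattern is obtained by combining, per START event of t, the count of the prefix pattern before it with the count of the suffix pattern after it.) -/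
section MatchCount

variable {Event τ : Type*} [DecidableEq τ] (type : Event → τ)

theorem matchCount_eq_countP_sublists' (p : List τ) (l : List Event) :
    matchCount type p l = l.sublists'.countP (fun s => s.map type = p) := by
  rw [matchCount, ← List.countP_eq_length_filter]
  exact (List.sublists_perm_sublists' l).countP_eq _

@[simp]
theorem matchCount_nil_left (l : List Event) : matchCount type [] l = 1 := by
  induction l with
  | nil => rfl
  | cons a l ih =>
    rw [matchCount_eq_countP_sublists'] at ih ⊢
    simpa [List.sublists'_cons, List.countP_append, List.countP_map, Function.comp_def] using ih

@[simp]
theorem matchCount_cons_nil (x : τ) (p : List τ) :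
    matchCount type (x :: p) ([] : List Event) = 0 := by
  simp [matchCount]

theorem matchCount_cons_cons (x : τ) (p : List τ) (a : Event) (l : List Event) :
    matchCount type (x :: p) (a :: l) =
      matchCount type (x :: p) l + if type a = x then matchCount type p l else 0 := by
  simp only [matchCount_eq_countP_sublists', List.sublists'_cons, List.countP_append,
    List.countP_map]
  congr 1
  split_ifs with h
  · exact List.countP_congr fun s _ => by simp [h]
  · exact List.countP_eq_zero.2 fun s _ => by simp [h]

theorem matchCount_append_cons (s : List τ) (x : τ) (t : List τ) (l : List Event) :
    matchCount type (s ++ x :: t) l =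
      ∑ i : Fin l.length, if type (l.get i) = x then
        matchCount type s (l.take i) * matchCount type t (l.drop (i + 1)) else 0 := by
  induction l generalizing s with
  | nil => cases s <;> simp
  | cons a l ih =>
    simp only [List.length_cons, Fin.sum_univ_succ]
    simp only [List.get_eq_getElem, Fin.val_zero, Fin.val_succ, List.getElem_cons_zero,
      List.getElem_cons_succ, List.take_zero, List.take_succ_cons, List.drop_succ_cons,
      List.drop_zero]
    simp only [List.get_eq_getElem] at ih
    cases s with
    | nil =>
      have ih_nil := ih []
      simp only [List.nil_append, matchCount_nil_left, one_mul] at ih_nil ⊢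
      rw [matchCount_cons_cons, ih_nil, add_comm]
    | cons y s =>
      have ih_cons := ih (y :: s)
      simp only [List.cons_append] at ih_cons
      simp only [List.cons_append, matchCount_cons_cons, matchCount_cons_nil, zero_mul, ite_self,
        zero_add, ih_cons, ih s]
      split_ifs with hay
      · rw [← Finset.sum_add_distrib]
        exact Finset.sum_congr rfl fun i _ => by split_ifs <;> ring
      · simp

end MatchCount

/-- Correctness of the Shared method's count-combination step: the count of the
concatenated pattern `s ++ t` is obtained by combining, per START event of `t`, the
count of `s` before it with the count of `t.tail` after it. -/
theorem stmt_12 {Event τ : Type*} [DecidableEq τ] (type : Event → τ)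
    (s t : List τ) (ht : t ≠ []) (l : List Event) :
    matchCount type (s ++ t) l =
      ∑ i : Fin l.length,
        if type (l.get i) = t.head ht then
          matchCount type s (l.take i) * matchCount type t.tail (l.drop (i + 1))
        else 0 := by
  obtain ⟨x, t, rfl⟩ := List.exists_cons_of_ne_nil ht
  exact matchCount_append_cons type s x t l
end
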